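/- Let u, v, w be unit vectors in R^3 with u·v = u·w = 0, and set v⊥ = u ∧ v, w⊥ = u ∧ w. Then for any nonzero x in R^3, min(|x·v⊥|, |x·w⊥|) ≤ ||x|| · dist(x,{v,w}) ≤ |x·u| + min(|x·v⊥|, |x·w⊥|), where dist(x,{v,w}) = min(dist(x,v), dist(x,w)). -/

import Mathlib

/-! Since `u`, `v` and `u ∧ v` form an orthonormal basis, Lagrange's identity gives
`‖x ∧ v‖² = ‖x‖² - (x·v)² = (x·u)² + (x·(u ∧ v))²`, and `‖x‖ · dist(x, v) = ‖x ∧ v‖`.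
So `‖x‖ · dist(x, v)` is the length of a vector with legs `x·u` and `x·(u ∧ v)`, which lies
between `|x·(u ∧ v)|` and `|x·u| + |x·(u ∧ v)|`; taking the minimum over `v` and `w`
gives both bounds. -/

noncomputable section

/-- Cross product in ℝ³. -/
def cross3 (x y : Fin 3 → ℝ) : Fin 3 → ℝ :=
  ![x 1 * y 2 - x 2 * y 1, x 2 * y 0 - x 0 * y 2, x 0 * y 1 - x 1 * y 0]

/-- Scalar product in ℝ³. -/
def dot3 (x y : Fin 3 → ℝ) : ℝ := x 0 * y 0 + x 1 * y 1 + x 2 * y 2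

/-- Euclidean norm in ℝ³. -/
def nrm (x : Fin 3 → ℝ) : ℝ := Real.sqrt (dot3 x x)

/-- Projective distance between nonzero vectors of ℝ³. -/
def pdist (x y : Fin 3 → ℝ) : ℝ := nrm (cross3 x y) / (nrm x * nrm y)

/-- The canonical map ℤ³ → ℝ³. -/
def toR (x : Fin 3 → ℤ) : Fin 3 → ℝ := fun i => (x i : ℝ)

/-- Determinant of three vectors of ℝ³. -/
def det3 (a b c : Fin 3 → ℝ) : ℝ :=
  a 0 * (b 1 * c 2 - b 2 * c 1) - a 1 * (b 0 * c 2 - b 2 * c 0) + a 2 * (b 0 * c 1 - b 1 * c 0)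

/-- Determinant of three vectors of ℤ³. -/
def det3Z (a b c : Fin 3 → ℤ) : ℤ :=
  a 0 * (b 1 * c 2 - b 2 * c 1) - a 1 * (b 0 * c 2 - b 2 * c 0) + a 2 * (b 0 * c 1 - b 1 * c 0)

/-- Cross product of integer vectors. -/
def crossZ (x y : Fin 3 → ℤ) : Fin 3 → ℤ :=
  ![x 1 * y 2 - x 2 * y 1, x 2 * y 0 - x 0 * y 2, x 0 * y 1 - x 1 * y 0]

/-- A point of ℤ³ is primitive if its coordinates are coprime (in particular it is nonzero). -/
def IsPrimitive (x : Fin 3 → ℤ) : Prop := Int.gcd (Int.gcd (x 0) (x 1)) (x 2) = 1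

/-- A pair of points of ℤ³ is primitive if their cross product is a primitive point. -/
def PrimPair (x y : Fin 3 → ℤ) : Prop := IsPrimitive (crossZ x y)

/-- The golden ratio. -/
def γ : ℝ := (1 + Real.sqrt 5) / 2

lemma dot3_self_nonneg (x : Fin 3 → ℝ) : 0 ≤ dot3 x x :=
  add_nonneg (add_nonneg (mul_self_nonneg _) (mul_self_nonneg _)) (mul_self_nonneg _)

lemma nrm_nonneg (x : Fin 3 → ℝ) : 0 ≤ nrm x :=
  Real.sqrt_nonneg _

lemma dot3_self_eq_one_of_nrm_eq_one {u : Fin 3 → ℝ} (hu : nrm u = 1) : dot3 u u = 1 :=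
  Real.sqrt_eq_one.mp hu

lemma dot3_cross3_self (x y : Fin 3 → ℝ) :
    dot3 (cross3 x y) (cross3 x y) = dot3 x x * dot3 y y - dot3 x y ^ 2 := by
  simp only [dot3, cross3, Matrix.cons_val_zero, Matrix.cons_val_one, Matrix.cons_val_two,
    Matrix.head_cons, Matrix.tail_cons]
  ring

lemma dot3_self_eq_of_orthonormal {u v : Fin 3 → ℝ} (hu : dot3 u u = 1) (hv : dot3 v v = 1)
    (huv : dot3 u v = 0) (x : Fin 3 → ℝ) :
    dot3 x x = dot3 x u ^ 2 + dot3 x v ^ 2 + dot3 x (cross3 u v) ^ 2 := by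
  have gram : dot3 x x * (dot3 u u * dot3 v v - dot3 u v ^ 2) =
      dot3 x (cross3 u v) ^ 2 + dot3 x u ^ 2 * dot3 v v + dot3 x v ^ 2 * dot3 u u
        - 2 * dot3 x u * dot3 x v * dot3 u v := by
    simp only [dot3, cross3, Matrix.cons_val_zero, Matrix.cons_val_one, Matrix.cons_val_two,
      Matrix.head_cons, Matrix.tail_cons]
    ring
  rw [hu, hv, huv] at gram
  linarith

lemma nrm_cross3_of_orthonormal {u v : Fin 3 → ℝ} (hu : dot3 u u = 1) (hv : dot3 v v = 1)
    (huv : dot3 u v = 0) (x : Fin 3 → ℝ) :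
    nrm (cross3 x v) = √(dot3 x u ^ 2 + dot3 x (cross3 u v) ^ 2) := by
  rw [nrm, dot3_cross3_self, hv, dot3_self_eq_of_orthonormal hu hv huv x]
  ring_nf

lemma nrm_mul_pdist {v : Fin 3 → ℝ} (hv : nrm v = 1) (x : Fin 3 → ℝ) :
    nrm x * pdist x v = nrm (cross3 x v) := by
  rcases eq_or_ne (nrm x) 0 with hx | hx
  -- `pdist x v` is the junk value `0` here, and `x ∧ v = 0` as `‖x ∧ v‖² ≤ ‖x‖² ‖v‖²`.
  · have hxx : dot3 x x ≤ 0 := Real.sqrt_eq_zero'.mp hx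
    rw [hx, zero_mul, eq_comm, nrm, Real.sqrt_eq_zero', dot3_cross3_self,
      dot3_self_eq_one_of_nrm_eq_one hv]
    nlinarith [dot3_self_nonneg x, sq_nonneg (dot3 x v)]
  · rw [pdist, hv, mul_one, mul_div_cancel₀ _ hx]

lemma abs_le_sqrt_sq_add_sq (a c : ℝ) : |c| ≤ √(a ^ 2 + c ^ 2) :=
  Real.abs_le_sqrt (by nlinarith [sq_nonneg a])

lemma sqrt_sq_add_sq_le (a c : ℝ) : √(a ^ 2 + c ^ 2) ≤ |a| + |c| :=
  Real.sqrt_le_iff.mpr ⟨by positivity, by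
    nlinarith [sq_abs a, sq_abs c, mul_nonneg (abs_nonneg a) (abs_nonneg c)]⟩

theorem stmt3_general (u v w : Fin 3 → ℝ) (hu : nrm u = 1) (hv : nrm v = 1) (hw : nrm w = 1)
    (huv : dot3 u v = 0) (huw : dot3 u w = 0) (x : Fin 3 → ℝ) :
    min |dot3 x (cross3 u v)| |dot3 x (cross3 u w)| ≤ nrm x * min (pdist x v) (pdist x w) ∧
      nrm x * min (pdist x v) (pdist x w) ≤
        |dot3 x u| + min |dot3 x (cross3 u v)| |dot3 x (cross3 u w)| := by
  have hu' := dot3_self_eq_one_of_nrm_eq_one hu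
  rw [mul_min_of_nonneg _ _ (nrm_nonneg x), nrm_mul_pdist hv, nrm_mul_pdist hw,
    nrm_cross3_of_orthonormal hu' (dot3_self_eq_one_of_nrm_eq_one hv) huv,
    nrm_cross3_of_orthonormal hu' (dot3_self_eq_one_of_nrm_eq_one hw) huw, ← min_add_add_left]
  exact ⟨min_le_min (abs_le_sqrt_sq_add_sq _ _) (abs_le_sqrt_sq_add_sq _ _),
    min_le_min (sqrt_sq_add_sq_le _ _) (sqrt_sq_add_sq_le _ _)⟩

/-- Lemma 1 of the paper. -/
theorem stmt3 (u v w : Fin 3 → ℝ) (hu : nrm u = 1) (hv : nrm v = 1) (hw : nrm w = 1)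
    (huv : dot3 u v = 0) (huw : dot3 u w = 0) (x : Fin 3 → ℝ) (hx : x ≠ 0) :
    min |dot3 x (cross3 u v)| |dot3 x (cross3 u w)| ≤ nrm x * min (pdist x v) (pdist x w) ∧
      nrm x * min (pdist x v) (pdist x w) ≤
        |dot3 x u| + min |dot3 x (cross3 u v)| |dot3 x (cross3 u w)| :=
  stmt3_general u v w hu hv hw huv huw x
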